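/- Let g be a probability measure supported on [-M, M] and τ > 0 with τ² > M². Then the function V(φ) = -log ∫ exp(-(φ-θ)²/(2τ²)) dg(θ) is strongly convex on ℝ with V''(φ) ≥ 1/τ² - M²/τ⁴ > 0. In particular the Gaussian-smoothed density N_τ * g is strongly log-concave when τ² > M². -/

import Mathlib

open MeasureTheory Real
open scoped ContDiff

/-!
With `Z n φ = ∫ θ ^ n * exp (-(φ - θ) ^ 2 / (2 * τ ^ 2)) dg(θ)`, differentiating under the
integral gives `Z n' = (Z (n + 1) - φ * Z n) / τ ^ 2`, so every `Z n` is smooth and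
`V = -log (Z 0)` has `V' = (φ - Z 1 / Z 0) / τ ^ 2` (Tweedie's formula) and
`V'' = 1 / τ ^ 2 - (Z 2 / Z 0 - (Z 1 / Z 0) ^ 2) / τ ^ 4 = 1 / τ ^ 2 - Var_g(θ | φ) / τ ^ 4`.
The posterior is supported in `[-M, M]`, so its variance is at most its second moment, hence at
most `M ^ 2`, and `V'' ≥ 1 / τ ^ 2 - M ^ 2 / τ ^ 4` yields strong convexity.
-/

theorem strongConvexOn_univ_of_le_iteratedDeriv_two {f : ℝ → ℝ} {m : ℝ} (hf2 : ContDiff ℝ 2 f)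
    (hm : ∀ x, m ≤ iteratedDeriv 2 f x) : StrongConvexOn Set.univ m f := by
  have hf : Differentiable ℝ f := hf2.differentiable (by norm_num)
  have hf' : Differentiable ℝ (deriv f) :=
    (contDiff_succ_iff_deriv.mp (hf2 : ContDiff ℝ (1 + 1) f)).2.2.differentiable one_ne_zero
  have hq : ∀ x : ℝ, HasDerivAt (fun y : ℝ => m / 2 * ‖y‖ ^ 2) (m * x) x := fun x => by
    simp only [norm_eq_abs, sq_abs]
    refine ((hasDerivAt_pow 2 x).const_mul (m / 2)).congr_deriv ?_
    norm_num
    ring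
  have hq_deriv : deriv (fun x => f x - m / 2 * ‖x‖ ^ 2) = fun x => deriv f x - m * x :=
    funext fun x => ((hf x).hasDerivAt.sub (hq x)).deriv
  rw [strongConvexOn_iff_convex]
  refine convexOn_univ_of_deriv2_nonneg (hf.sub fun x => (hq x).differentiableAt) ?_ fun x => ?_
  · rw [hq_deriv]; fun_prop
  · have h2 : HasDerivAt (fun x => deriv f x - m * x) (deriv (deriv f) x - m * 1) x :=
      (hf' x).hasDerivAt.sub ((hasDerivAt_id x).const_mul m)
    have := hm x
    rw [iteratedDeriv_succ, iteratedDeriv_one] at this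
    rw [← iteratedDeriv_eq_iterate, iteratedDeriv_succ, iteratedDeriv_one, hq_deriv, h2.deriv]
    linarith

section GaussianKernel

variable (τ : ℝ)

theorem hasDerivAt_exp_neg_sq_div (θ φ : ℝ) :
    HasDerivAt (fun φ => exp (-(φ - θ) ^ 2 / (2 * τ ^ 2)))
      ((θ - φ) / τ ^ 2 * exp (-(φ - θ) ^ 2 / (2 * τ ^ 2))) φ := by
  have h : HasDerivAt (fun φ => -(φ - θ) ^ 2 / (2 * τ ^ 2)) (-(2 * (φ - θ)) / (2 * τ ^ 2)) φ := by
    simpa using ((hasDerivAt_id φ).sub_const θ).pow 2 |>.neg.div_const (2 * τ ^ 2)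
  convert h.exp using 1
  ring

theorem exp_neg_sq_div_le_one (θ φ : ℝ) : exp (-(φ - θ) ^ 2 / (2 * τ ^ 2)) ≤ 1 :=
  exp_le_one_iff.mpr <| div_nonpos_of_nonpos_of_nonneg (neg_nonpos.mpr (sq_nonneg _))
    (by positivity)

variable {M : ℝ} (g : Measure ℝ)

noncomputable def gaussMoment (n : ℕ) (φ : ℝ) : ℝ :=
  ∫ θ, θ ^ n * exp (-(φ - θ) ^ 2 / (2 * τ ^ 2)) ∂g

/-- `gaussMoment τ g n φ / gaussMoment τ g 0 φ` is the `n`-th moment of `θ ~ g` conditioned on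
`θ + τ Z = φ`, so this is `Var_g(θ | φ)`. -/
noncomputable def posteriorVariance (φ : ℝ) : ℝ :=
  gaussMoment τ g 2 φ / gaussMoment τ g 0 φ - (gaussMoment τ g 1 φ / gaussMoment τ g 0 φ) ^ 2

noncomputable def smoothedPotential (φ : ℝ) : ℝ :=
  -log (gaussMoment τ g 0 φ)

theorem gaussMoment_zero (φ : ℝ) :
    gaussMoment τ g 0 φ = ∫ θ, exp (-(φ - θ) ^ 2 / (2 * τ ^ 2)) ∂g := by
  simp [gaussMoment]

variable [IsFiniteMeasure g]

theorem gaussMoment_zero_pos [NeZero g] (φ : ℝ) : 0 < gaussMoment τ g 0 φ := by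
  rw [gaussMoment_zero]
  refine integral_exp_pos (Integrable.of_bound (by fun_prop) 1 (ae_of_all _ fun θ => ?_))
  rw [norm_of_nonneg (exp_pos _).le]
  exact exp_neg_sq_div_le_one τ θ φ

variable {g} (hg : ∀ᵐ θ ∂g, |θ| ≤ M)
include hg

theorem integrable_gaussMoment (n : ℕ) (φ : ℝ) :
    Integrable (fun θ => θ ^ n * exp (-(φ - θ) ^ 2 / (2 * τ ^ 2))) g := by
  refine Integrable.of_bound (by fun_prop) (M ^ n) (hg.mono fun θ hθ => ?_)
  rw [norm_mul, norm_pow, norm_of_nonneg (exp_pos _).le, norm_eq_abs]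
  exact (mul_le_of_le_one_right (by positivity) (exp_neg_sq_div_le_one τ θ φ)).trans
    (pow_le_pow_left₀ (abs_nonneg θ) hθ n)

theorem hasDerivAt_gaussMoment (n : ℕ) (φ : ℝ) :
    HasDerivAt (gaussMoment τ g n)
      ((gaussMoment τ g (n + 1) φ - φ * gaussMoment τ g n φ) / τ ^ 2) φ := by
  have hbound : ∀ᵐ θ ∂g, ∀ ψ ∈ Metric.ball φ 1,
      ‖θ ^ n * ((θ - ψ) / τ ^ 2 * exp (-(ψ - θ) ^ 2 / (2 * τ ^ 2)))‖ ≤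
        M ^ n * ((M + |φ| + 1) / τ ^ 2) := by
    filter_upwards [hg] with θ hθ ψ hψ
    have hθψ : |θ - ψ| ≤ M + |φ| + 1 := by
      rw [Metric.mem_ball, dist_eq, abs_lt] at hψ
      rw [abs_le] at hθ ⊢
      constructor <;> linarith [le_abs_self φ, neg_abs_le φ]
    rw [norm_mul, norm_mul, norm_div, norm_pow, norm_pow, norm_of_nonneg (exp_pos _).le,
      norm_eq_abs, norm_eq_abs, norm_eq_abs, sq_abs]
    exact mul_le_mul (pow_le_pow_left₀ (abs_nonneg θ) hθ n)
      ((mul_le_of_le_one_right (by positivity) (exp_neg_sq_div_le_one τ θ ψ)).trans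
        (by gcongr)) (by positivity) (pow_nonneg ((abs_nonneg θ).trans hθ) n)
  have h := hasDerivAt_integral_of_dominated_loc_of_deriv_le (Metric.ball_mem_nhds φ one_pos)
    (Filter.Eventually.of_forall fun ψ => (integrable_gaussMoment τ hg n ψ).aestronglyMeasurable)
    (integrable_gaussMoment τ hg n φ) (by fun_prop) hbound (integrable_const _)
    (ae_of_all _ fun θ ψ _ => (hasDerivAt_exp_neg_sq_div τ θ ψ).const_mul (θ ^ n))
  refine h.2.congr_deriv ?_
  have hsplit : (fun θ => θ ^ n * ((θ - φ) / τ ^ 2 * exp (-(φ - θ) ^ 2 / (2 * τ ^ 2)))) =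
      fun θ => (θ ^ (n + 1) * exp (-(φ - θ) ^ 2 / (2 * τ ^ 2)) -
        φ * (θ ^ n * exp (-(φ - θ) ^ 2 / (2 * τ ^ 2)))) / τ ^ 2 := by
    funext θ; ring
  rw [hsplit, integral_div, integral_sub (integrable_gaussMoment τ hg (n + 1) φ)
    ((integrable_gaussMoment τ hg n φ).const_mul φ), integral_const_mul]
  rfl

theorem differentiable_gaussMoment (n : ℕ) : Differentiable ℝ (gaussMoment τ g n) :=
  fun φ => (hasDerivAt_gaussMoment τ hg n φ).differentiableAt

theorem contDiff_gaussMoment (n : ℕ) : ContDiff ℝ ∞ (gaussMoment τ g n) := by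
  refine contDiff_infty.mpr fun k => ?_
  induction k generalizing n with
  | zero => exact contDiff_zero.mpr (differentiable_gaussMoment τ hg n).continuous
  | succ k ih =>
    have hderiv : deriv (gaussMoment τ g n) =
        fun φ => (gaussMoment τ g (n + 1) φ - φ * gaussMoment τ g n φ) / τ ^ 2 :=
      funext fun φ => (hasDerivAt_gaussMoment τ hg n φ).deriv
    rw [Nat.cast_succ, contDiff_succ_iff_deriv, hderiv]
    exact ⟨differentiable_gaussMoment τ hg n, by simp,
      ((ih (n + 1)).sub (contDiff_id.mul (ih n))).div_const _⟩

theorem posteriorVariance_le [NeZero g] (φ : ℝ) : posteriorVariance τ g φ ≤ M ^ 2 := by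
  have hZ0 := gaussMoment_zero_pos τ g φ
  have hsecond : gaussMoment τ g 2 φ ≤ M ^ 2 * gaussMoment τ g 0 φ := by
    rw [gaussMoment, gaussMoment, ← integral_const_mul]
    refine integral_mono_ae (integrable_gaussMoment τ hg 2 φ)
      ((integrable_gaussMoment τ hg 0 φ).const_mul _) (hg.mono fun θ hθ => ?_)
    simp only [pow_zero, one_mul]
    exact mul_le_mul_of_nonneg_right (sq_le_sq' (abs_le.mp hθ).1 (abs_le.mp hθ).2) (exp_pos _).le
  exact (sub_le_self _ (sq_nonneg _)).trans ((div_le_iff₀ hZ0).mpr hsecond)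

theorem hasDerivAt_smoothedPotential [NeZero g] (φ : ℝ) :
    HasDerivAt (smoothedPotential τ g)
      ((φ - gaussMoment τ g 1 φ / gaussMoment τ g 0 φ) / τ ^ 2) φ := by
  have hZ0 := (gaussMoment_zero_pos τ g φ).ne'
  refine ((hasDerivAt_gaussMoment τ hg 0 φ).log hZ0).neg.congr_deriv ?_
  field_simp
  ring

theorem iteratedDeriv_two_smoothedPotential [NeZero g] (hτ : τ ≠ 0) (φ : ℝ) :
    iteratedDeriv 2 (smoothedPotential τ g) φ = 1 / τ ^ 2 - posteriorVariance τ g φ / τ ^ 4 := by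
  have hZ0 := (gaussMoment_zero_pos τ g φ).ne'
  have hderiv : deriv (smoothedPotential τ g) =
      fun φ => (φ - gaussMoment τ g 1 φ / gaussMoment τ g 0 φ) / τ ^ 2 :=
    funext fun φ => (hasDerivAt_smoothedPotential τ hg φ).deriv
  have h : HasDerivAt (fun φ => (φ - gaussMoment τ g 1 φ / gaussMoment τ g 0 φ) / τ ^ 2) _ φ :=
    ((hasDerivAt_id φ).sub ((hasDerivAt_gaussMoment τ hg 1 φ).div
    (hasDerivAt_gaussMoment τ hg 0 φ) hZ0)).div_const (τ ^ 2)
  rw [iteratedDeriv_succ, iteratedDeriv_one, hderiv, h.deriv, posteriorVariance]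
  field_simp
  ring

theorem contDiff_smoothedPotential [NeZero g] : ContDiff ℝ ∞ (smoothedPotential τ g) :=
  ((contDiff_gaussMoment τ hg 0).log fun φ => (gaussMoment_zero_pos τ g φ).ne').neg

end GaussianKernel

theorem stmt3 (M τ : ℝ) (hM : 0 < M) (hτ : M < τ)
    (g : Measure ℝ) [IsProbabilityMeasure g] (hg : g (Set.Icc (-M) M) = 1) :
    0 < 1 / τ ^ 2 - M ^ 2 / τ ^ 4 ∧
    ContDiff ℝ 2 (fun x : ℝ => -Real.log (∫ θ, Real.exp (-(x - θ) ^ 2 / (2 * τ ^ 2)) ∂g)) ∧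
    (∀ φ : ℝ, 1 / τ ^ 2 - M ^ 2 / τ ^ 4 ≤
      iteratedDeriv 2 (fun x : ℝ => -Real.log (∫ θ, Real.exp (-(x - θ) ^ 2 / (2 * τ ^ 2)) ∂g)) φ) ∧
    StrongConvexOn Set.univ (1 / τ ^ 2 - M ^ 2 / τ ^ 4)
      (fun x : ℝ => -Real.log (∫ θ, Real.exp (-(x - θ) ^ 2 / (2 * τ ^ 2)) ∂g)) := by
  have hτ0 : 0 < τ := hM.trans hτ
  have hsupp : ∀ᵐ θ ∂g, |θ| ≤ M := by
    filter_upwards [(ae_mem_iff_measure_eq measurableSet_Icc.nullMeasurableSet).mpr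
      (hg.trans measure_univ.symm)] with θ hθ using abs_le.mpr hθ
  have hV : (fun x : ℝ => -log (∫ θ, exp (-(x - θ) ^ 2 / (2 * τ ^ 2)) ∂g)) =
      smoothedPotential τ g := by
    funext φ; rw [smoothedPotential, gaussMoment_zero]
  have hlower : ∀ φ, 1 / τ ^ 2 - M ^ 2 / τ ^ 4 ≤ iteratedDeriv 2 (smoothedPotential τ g) φ := by
    intro φ
    rw [iteratedDeriv_two_smoothedPotential τ hsupp hτ0.ne']
    gcongr
    exact posteriorVariance_le τ hsupp φ
  have hC2 : ContDiff ℝ 2 (smoothedPotential τ g) :=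
    contDiff_infty.mp (contDiff_smoothedPotential τ hsupp) 2
  rw [hV]
  refine ⟨?_, hC2, hlower, strongConvexOn_univ_of_le_iteratedDeriv_two hC2 hlower⟩
  rw [sub_pos, div_lt_div_iff₀ (by positivity) (by positivity)]
  nlinarith [mul_lt_mul_of_pos_right (pow_lt_pow_left₀ hτ hM.le two_ne_zero) (pow_pos hτ0 2)]
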